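/- Let β be an irrational real number. If w is a β-Dyck word over the alphabet {N,E}, then sw_β(w) is also a β-Dyck word. -/

import Mathlib

/-!
When all step levels are nonnegative, `sw_β` lists the steps of `w` by decreasing level, and
irrationality of `β` makes the levels distinct. Hence every nonempty prefix of `sw_β(w)` consists
exactly of the steps of `w` whose level is at least some `t ≥ 0`, and the level reached by the
swept path is the total weight of these steps. For a path started at level `a`, the steps ending
at level `≥ t` have total weight at least `min (t - a) 0`, which is `0` here.
-/

inductive Letter : Type
  | N : Letter
  | E : Letter
deriving DecidableEq, Repr

/-- Weight of a step for slope `β`: a north step raises `y - βx` by `1`,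
    an east step changes it by `-β`. -/
noncomputable def wtR (β : ℝ) : Letter → ℝ
  | Letter.N => 1
  | Letter.E => -β

/-- Pair each letter with the level `y - βx` of the endpoint of the corresponding
    step of `mkpath(w)`, starting from level `l` (so from `l = 0` at the origin). -/
noncomputable def lvlsR (β : ℝ) : ℝ → List Letter → List (Letter × ℝ)
  | _, [] => []
  | l, c :: w => (c, l + wtR β c) :: lvlsR β (l + wtR β c) w

open Classical in
/-- `negBeforeR k k' = true` iff level `k` is swept before (or equals) level `k'`:
    negative levels first, in decreasing order, then nonnegative levels in
    decreasing order. -/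
noncomputable def negBeforeR (k k' : ℝ) : Bool :=
  if k < 0 then (if k' < 0 then decide (k' ≤ k) else true)
  else (if k' < 0 then false else decide (k' ≤ k))

/-- The sweep map `sw_β`: the letters of `w` are listed by order of their step
    levels, negative levels first in decreasing order, then nonnegative levels in
    decreasing order (a stable sort by the level order). -/
noncomputable def sweepR (β : ℝ) (w : List Letter) : List Letter :=
  ((lvlsR β 0 w).mergeSort (fun p q => negBeforeR p.2 q.2)).map Prod.fst

/-- `w` is a `β`-Dyck word iff every lattice point `(x,y)` visited by `mkpath(w)`
    satisfies `y ≥ βx`, i.e. all step levels are nonnegative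
    (the origin has level `0 ≥ 0`). -/
def IsDyckWordR (β : ℝ) (w : List Letter) : Prop :=
  ∀ p ∈ lvlsR β 0 w, 0 ≤ p.2

lemma sum_map_wtR (β : ℝ) (u : List Letter) :
    (u.map (wtR β)).sum = u.count Letter.N - β * u.count Letter.E := by
  induction u with
  | nil => simp
  | cons c u ih => cases c <;> simp [wtR, ih] <;> ring

lemma sum_map_wtR_ne_zero {β : ℝ} (hβ : Irrational β) {u : List Letter} (hu : u ≠ []) :
    (u.map (wtR β)).sum ≠ 0 := by
  rw [sum_map_wtR, sub_ne_zero]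
  by_cases hE : u.count Letter.E = 0
  · have hN : u.count Letter.N ≠ 0 := by
      intro hN
      refine hu (List.eq_nil_iff_forall_not_mem.mpr fun c hc => ?_)
      cases c
      · exact List.count_eq_zero.mp hN hc
      · exact List.count_eq_zero.mp hE hc
    simpa [hE] using hN
  · exact fun h => (hβ.mul_natCast hE).ne_nat _ h.symm

lemma exists_snd_eq_sum_take_of_mem_lvlsR {β a : ℝ} {u : List Letter} {x : Letter × ℝ}
    (hx : x ∈ lvlsR β a u) :
    ∃ i < u.length, x.2 = a + ((u.take (i + 1)).map (wtR β)).sum := by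
  induction u generalizing a with
  | nil => simp [lvlsR] at hx
  | cons c u ih =>
    rcases List.mem_cons.mp hx with rfl | hx
    · exact ⟨0, by simp, by simp⟩
    · obtain ⟨i, hi, hxi⟩ := ih hx
      exact ⟨i + 1, by simpa using hi, by simp [hxi, add_assoc]⟩

lemma isDyckWordR_of_forall_sum_take_nonneg {β : ℝ} {v : List Letter}
    (h : ∀ i < v.length, 0 ≤ ((v.take (i + 1)).map (wtR β)).sum) : IsDyckWordR β v := by
  intro x hx
  obtain ⟨i, hi, hxi⟩ := exists_snd_eq_sum_take_of_mem_lvlsR hx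
  simpa [hxi] using h i hi

lemma nodup_map_snd_lvlsR {β : ℝ} (hβ : Irrational β) (a : ℝ) (u : List Letter) :
    ((lvlsR β a u).map Prod.snd).Nodup := by
  induction u generalizing a with
  | nil => simp [lvlsR]
  | cons c u ih =>
    refine List.nodup_cons.mpr ⟨fun hmem => ?_, ih _⟩
    obtain ⟨x, hx, hxc⟩ := List.mem_map.mp hmem
    obtain ⟨i, hi, hxi⟩ := exists_snd_eq_sum_take_of_mem_lvlsR hx
    refine sum_map_wtR_ne_zero hβ (u := u.take (i + 1))
      (by simpa using List.ne_nil_of_length_pos (Nat.zero_lt_of_lt hi)) ?_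
    linarith

lemma min_sub_le_sum_wtR_filter_le (β t a : ℝ) (u : List Letter) :
    min (t - a) 0 ≤
      (((lvlsR β a u).filter fun x => decide (t ≤ x.2)).map fun x => wtR β x.1).sum := by
  induction u generalizing a with
  | nil => simp [lvlsR]
  | cons c u ih =>
    have ih := ih (a + wtR β c)
    simp only [lvlsR, List.filter_cons, decide_eq_true_eq]
    split_ifs with h
    · simp only [List.map_cons, List.sum_cons]
      rcases le_total 0 (wtR β c) with hc | hc <;>
        cases min_cases (t - (a + wtR β c)) 0 <;> cases min_cases (t - a) 0 <;> linarith
    · rw [min_eq_right (by linarith)] at ih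
      exact (min_le_right _ _).trans ih

lemma negBeforeR_trans {a b c : ℝ} (hab : negBeforeR a b) (hbc : negBeforeR b c) :
    negBeforeR a c := by
  unfold negBeforeR at *
  split_ifs at * <;> simp_all <;> linarith

lemma negBeforeR_total (a b : ℝ) : (negBeforeR a b || negBeforeR b a) = true := by
  unfold negBeforeR
  split_ifs <;> simp_all [le_total]

lemma le_of_negBeforeR {a b : ℝ} (ha : 0 ≤ a) (hb : 0 ≤ b) (h : negBeforeR a b) :
    b ≤ a := by
  simpa [negBeforeR, not_lt.mpr ha, not_lt.mpr hb] using h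

lemma List.Pairwise.snd_lt_of_negBeforeR {α : Type*} {M : List (α × ℝ)}
    (hM : M.Pairwise fun x y => negBeforeR x.2 y.2) (hnonneg : ∀ x ∈ M, 0 ≤ x.2)
    (hnodup : (M.map Prod.snd).Nodup) : M.Pairwise fun x y => y.2 < x.2 :=
  (hM.and (List.pairwise_map.mp hnodup)).imp_of_mem fun hx hy ⟨hxy, hne⟩ =>
    (le_of_negBeforeR (hnonneg _ hx) (hnonneg _ hy) hxy).lt_of_ne (Ne.symm hne)

lemma List.take_succ_eq_filter_of_pairwise_lt {α γ : Type*} [LinearOrder γ] {f : α → γ}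
    {M : List α} (hM : M.Pairwise fun x y => f y < f x) {i : ℕ} (hi : i < M.length) :
    M.take (i + 1) = M.filter fun y => decide (f M[i] ≤ f y) := by
  induction M generalizing i with
  | nil => simp at hi
  | cons a M ih =>
    obtain ⟨ha, hM⟩ := List.pairwise_cons.mp hM
    cases i with
    | zero =>
      have hrest : (M.filter fun y => decide (f a ≤ f y)) = [] :=
        List.filter_eq_nil_iff.mpr fun y hy => by simpa using ha y hy
      simp [hrest]
    | succ j =>
      have hj : j < M.length := by simpa using hi
      have hhead : f M[j] ≤ f a := (ha _ (List.getElem_mem hj)).le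
      rw [List.take_succ_cons, ih hM hj, List.filter_cons_of_pos (by simpa using hhead)]
      rfl

/-- If `β` is irrational and `w` is a `β`-Dyck word, then `sw_β(w)` is a `β`-Dyck word. -/
theorem sweepR_isDyckWordR (β : ℝ) (hβ : Irrational β) (w : List Letter)
    (hw : IsDyckWordR β w) : IsDyckWordR β (sweepR β w) := by
  set L := lvlsR β 0 w
  set M := L.mergeSort fun p q => negBeforeR p.2 q.2
  have hperm : M.Perm L := List.mergeSort_perm L _
  have hnonneg : ∀ x ∈ M, 0 ≤ x.2 := fun x hx => hw x (hperm.mem_iff.mp hx)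
  have hsorted : M.Pairwise fun x y => y.2 < x.2 :=
    (List.pairwise_mergeSort (le := fun p q => negBeforeR p.2 q.2)
      (fun _ _ _ => negBeforeR_trans) (fun p q => negBeforeR_total p.2 q.2) L).snd_lt_of_negBeforeR
      hnonneg ((hperm.map Prod.snd).nodup_iff.mpr (nodup_map_snd_lvlsR hβ 0 w))
  refine isDyckWordR_of_forall_sum_take_nonneg fun i hi => ?_
  replace hi : i < M.length := by rwa [sweepR, List.length_map] at hi
  calc (0 : ℝ) = min (M[i].2 - 0) 0 := by simp [hnonneg _ (List.getElem_mem hi)]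
    _ ≤ ((L.filter fun x => decide (M[i].2 ≤ x.2)).map fun x => wtR β x.1).sum :=
      min_sub_le_sum_wtR_filter_le β _ 0 w
    _ = ((M.take (i + 1)).map fun x => wtR β x.1).sum := by
      rw [List.take_succ_eq_filter_of_pairwise_lt hsorted hi]
      exact (((hperm.filter _).map _).sum_eq).symm
    _ = (((sweepR β w).take (i + 1)).map (wtR β)).sum := by
      simp only [sweepR, List.map_take, List.map_map]
      rfl
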